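/- Let 𝒯 be a class of topological spaces closed under homeomorphic images, closed under arbitrary products, closed under finite products, and satisfying (W2) and (W3). If X = ∏_{i∈I} X_i is a nonempty product, then X is a local 𝒯-space if and only if every factor is a local 𝒯-space and all but finitely many factors belong to 𝒯. -/

import Mathlib

universe u

def IsLocalT (T : ∀ (X : Type u) [TopologicalSpace X], Prop)
    (X : Type u) [TopologicalSpace X] : Prop :=
  ∀ x : X, ∀ U ∈ nhds x, ∃ V ∈ nhds x, V ⊆ U ∧ T ↥V

def IsLocal1T (T : ∀ (X : Type u) [TopologicalSpace X], Prop)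
    (X : Type u) [TopologicalSpace X] : Prop :=
  ∀ x : X, ∃ V ∈ nhds x, T ↥V

def ClosedUnderHomeo (T : ∀ (X : Type u) [TopologicalSpace X], Prop) : Prop :=
  ∀ (X Y : Type u) [TopologicalSpace X] [TopologicalSpace Y], T X → (X ≃ₜ Y) → T Y

def PropW2 (T : ∀ (X : Type u) [TopologicalSpace X], Prop) : Prop :=
  ∀ (A B : Type u) [TopologicalSpace A] [TopologicalSpace B] (a : A) (b : B)
    (S : Set (A × B)), S ∈ nhds (a, b) → T ↥S → ∃ s : Set A, s ∈ nhds a ∧ T ↥s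

def PropW3 (T : ∀ (X : Type u) [TopologicalSpace X], Prop) : Prop :=
  ∀ (A B : Type u) [TopologicalSpace A] [TopologicalSpace B], Nonempty A → Nonempty B →
    ∀ (Bo : Set B), Bo.Nonempty → IsOpen Bo →
    ∀ (S : Set (A × B)), (Set.univ ×ˢ Bo) ⊆ S → T ↥S → T A

def ClosedUnderFinProd (T : ∀ (X : Type u) [TopologicalSpace X], Prop) : Prop :=
  ∀ (A B : Type u) [TopologicalSpace A] [TopologicalSpace B], T A → T B → T (A × B)

/-- A set is homeomorphic to its image under an embedding. -/
noncomputable def embImageHomeo {X Y : Type u} [TopologicalSpace X] [TopologicalSpace Y]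
    {f : X → Y} (hf : Topology.IsEmbedding f) (s : Set X) : ↥s ≃ₜ ↥(f '' s) :=
  (Topology.IsEmbedding.toHomeomorph (hf.comp Topology.IsEmbedding.subtypeVal)).trans
    (Homeomorph.setCongr (by rw [Set.range_comp, Subtype.range_val]))

/-- A pi set is homeomorphic to the product of the sets. -/
def piSetHomeo {I : Type u} (X : I → Type u) [∀ i, TopologicalSpace (X i)]
    (W : ∀ i, Set (X i)) : ↥(Set.univ.pi W) ≃ₜ ∀ i, ↥(W i) where
  toFun f i := ⟨f.1 i, f.2 i trivial⟩
  invFun g := ⟨fun i => (g i).1, fun i _ => (g i).2⟩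
  left_inv f := rfl
  right_inv g := rfl
  continuous_toFun := continuous_pi fun i =>
    ((continuous_apply i).comp continuous_subtype_val).subtype_mk _
  continuous_invFun :=
    (continuous_pi fun i => continuous_subtype_val.comp (continuous_apply i)).subtype_mk _

theorem stmt10 (T : ∀ (X : Type u) [TopologicalSpace X], Prop)
    (hHomeo : ClosedUnderHomeo T) (hFinProd : ClosedUnderFinProd T)
    (hProd : ∀ (ι : Type u) (Y : ι → Type u) [∀ i, TopologicalSpace (Y i)],
      (∀ i, T (Y i)) → T (∀ i, Y i))
    (hW2 : PropW2 T) (hW3 : PropW3 T)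
    (I : Type u) (X : I → Type u) [∀ i, TopologicalSpace (X i)]
    (hne : Nonempty (∀ i, X i)) :
    IsLocalT T (∀ i, X i) ↔
      (∀ i, IsLocalT T (X i)) ∧ {i : I | ¬ T (X i)}.Finite := by
  classical
  obtain ⟨x₀⟩ := hne
  constructor
  · intro hloc
    constructor
    · intro i a U hU
      set x : ∀ j, X j := Function.update x₀ i a with hxdef
      have hxi : x i = a := Function.update_self i a x₀
      set O : Set (X i) := interior U with hOdef
      have hOopen : IsOpen O := isOpen_interior
      have haO : a ∈ O := mem_interior_iff_mem_nhds.2 hU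
      have hpre : (fun y : ∀ j, X j => y i) ⁻¹' O ∈ nhds x := by
        apply (continuous_apply i).continuousAt.preimage_mem_nhds
        rw [hxi]; exact hOopen.mem_nhds haO
      obtain ⟨V, hVnhds, hVsub, hVT⟩ := hloc x _ hpre
      set e := Homeomorph.piSplitAt i X with hedef
      set B := ∀ j : {j // j ≠ i}, X j with hBdef
      set b : B := fun j => x j.1 with hbdef
      have hex : e x = (a, b) := by
        simp only [hedef, Homeomorph.piSplitAt_apply, hxi]; rfl
      set S₀ : Set (X i × B) := e '' V with hS₀def
      have hS₀nhds : S₀ ∈ nhds (a, b) := by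
        rw [← hex]; exact e.isOpenMap.image_mem_nhds hVnhds
      have hS₀T : T ↥S₀ := hHomeo _ _ hVT (e.image V)
      have hS₀sub : ∀ p ∈ S₀, p.1 ∈ O := by
        rintro p ⟨y, hy, rfl⟩
        exact hVsub hy
      set ι : ↥O × B → X i × B := fun p => (p.1.1, p.2) with hιdef
      have hιemb : Topology.IsEmbedding ι :=
        Topology.IsEmbedding.subtypeVal.prodMap Topology.IsEmbedding.id
      set S : Set (↥O × B) := ι ⁻¹' S₀ with hSdef
      have hSnhds : S ∈ nhds ((⟨a, haO⟩ : ↥O), b) := by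
        apply hιemb.continuous.continuousAt.preimage_mem_nhds
        simpa [hιdef] using hS₀nhds
      have hιS : ι '' S = S₀ := by
        apply Set.image_preimage_eq_of_subset
        intro p hp
        exact ⟨(⟨p.1, hS₀sub p hp⟩, p.2), rfl⟩
      have hST : T ↥S := by
        have h1 : ↥S ≃ₜ ↥S₀ := (embImageHomeo hιemb S).trans (Homeomorph.setCongr hιS)
        exact hHomeo _ _ hS₀T h1.symm
      obtain ⟨s, hsnhds, hsT⟩ := hW2 (↥O) B ⟨a, haO⟩ b S hSnhds hST
      refine ⟨Subtype.val '' s, ?_, ?_, ?_⟩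
      · exact hOopen.isOpenMap_subtype_val.image_mem_nhds hsnhds
      · rintro _ ⟨z, hz, rfl⟩; exact interior_subset z.2
      · exact hHomeo _ _ hsT (embImageHomeo Topology.IsEmbedding.subtypeVal s)
    · obtain ⟨V, hVnhds, -, hVT⟩ := hloc x₀ Set.univ Filter.univ_mem
      rw [nhds_pi, Filter.mem_pi] at hVnhds
      obtain ⟨F, hFfin, t, ht, htV⟩ := hVnhds
      apply hFfin.subset
      intro i hi
      by_contra hiF
      apply hi
      set e := Homeomorph.piSplitAt i X with hedef
      set B := ∀ j : {j // j ≠ i}, X j with hBdef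
      have hBne : Nonempty B := ⟨fun j => x₀ j.1⟩
      set Bo : Set B :=
        Set.pi {j : {j // j ≠ i} | j.1 ∈ F} (fun j => interior (t j.1)) with hBodef
      have hBoopen : IsOpen Bo := by
        apply isOpen_set_pi
        · exact hFfin.preimage (Set.injOn_of_injective Subtype.val_injective)
        · exact fun j _ => isOpen_interior
      have hBone : Bo.Nonempty :=
        ⟨fun j => x₀ j.1, fun j _ => mem_interior_iff_mem_nhds.2 (ht j.1)⟩
      have hsub : (Set.univ ×ˢ Bo) ⊆ e '' V := by
        rintro ⟨a, c⟩ ⟨-, hc⟩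
        refine ⟨e.symm (a, c), ?_, e.apply_symm_apply _⟩
        apply htV
        intro j hj
        have hji : j ≠ i := fun h => hiF (h ▸ hj)
        have hval : e.symm (a, c) j = c ⟨j, hji⟩ := by
          simp [hedef, Homeomorph.piSplitAt_symm_apply, dif_neg hji]
        rw [hval]
        exact interior_subset (hc ⟨j, hji⟩ hj)
      exact hW3 (X i) B ⟨x₀ i⟩ hBne Bo hBone hBoopen (e '' V) hsub
        (hHomeo _ _ hVT (e.image V))
  · rintro ⟨hloc, hfin⟩ x U hU
    rw [nhds_pi, Filter.mem_pi] at hU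
    obtain ⟨G, hGfin, t, ht, htU⟩ := hU
    choose V hVnhds hVsub hVT using fun j => hloc j (x j) (t j) (ht j)
    set H := G ∪ {i | ¬ T (X i)} with hHdef
    have hHfin : H.Finite := hGfin.union hfin
    set W : ∀ j, Set (X j) := fun j => if j ∈ H then V j else Set.univ with hWdef
    have hWnhds : ∀ j, W j ∈ nhds (x j) := by
      intro j
      by_cases h : j ∈ H
      · simpa [hWdef, h] using hVnhds j
      · simp [hWdef, h]
    refine ⟨Set.univ.pi W, ?_, ?_, ?_⟩
    · rw [nhds_pi, Filter.mem_pi]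
      refine ⟨H, hHfin, W, hWnhds, fun y hy j _ => ?_⟩
      by_cases h : j ∈ H
      · exact hy j h
      · simp [hWdef, h]
    · intro y hy
      apply htU
      intro j hj
      have hyj := hy j trivial
      rw [hWdef] at hyj
      simp only [if_pos (show j ∈ H from Set.mem_union_left _ hj)] at hyj
      exact hVsub j hyj
    · apply hHomeo _ _ _ (piSetHomeo X W).symm
      apply hProd
      intro j
      by_cases h : j ∈ H
      · exact hHomeo _ _ (hVT j) (Homeomorph.setCongr (by simp [hWdef, h]))
      · have hTj : T (X j) := not_not.1 fun hn => h (Set.mem_union_right _ hn)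
        exact hHomeo _ _ hTj
          ((Homeomorph.Set.univ (X j)).symm.trans
            (Homeomorph.setCongr (by simp [hWdef, h])))
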